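/- arXiv:2411.07949 — 2 statements merged into one kernel-verified Lean document; each statement's English description precedes it below -/
import Mathlib

section
/- Let X, Y, Z̃ be independent standard Gaussians, 0 ≤ α < 1/2, η > 0, and let X̃₁ = αZ̃ + √(1-α²)Y, X̃₂ = αX̃₁ + √(1-α²)X. Then E[X · 1{-η < X̃₂ < η, -η < X̃₁ < η, Z̃ ≥ η}] ≤ 0, and |E[X · 1{-η < X̃₂ < η, -η < X̃₁ < η, Z̃ ≥ η}]| ≤ C(η) α² for some constant C(η) depending only on η. -/
/-!
Integrate out `X` first: given `X̃₁ = u`, the conditional moment `E[X; |α u + s X| < η]`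
(`s = √(1 - α²)`) is `φ((η + αu)/s) - φ((η - αu)/s)`, an odd function of `u` that is `≤ 0` and
`O(α u)` for `u ≥ 0`. Given `Z̃ = z ≥ η`, `X̃₁ ~ N(αz, s²)`, whose density at `u ≥ 0` exceeds the
one at `-u` by `O(α z)`. Pairing `u` with `-u` on `(-η, η)` makes the conditional drift an integral
of a nonpositive product of two `O(α)` factors, hence in `[-C α² η² z, 0]`; integrating over
`z ≥ η` gives the claim with `C(η) = 16 η² E|Z̃|`.
-/

open MeasureTheory ProbabilityTheory Real Set

local notation "φ" => gaussianPDFReal 0 1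
local notation "γ" => gaussianReal 0 1
local notation "γ³" =>
  Measure.prod (gaussianReal 0 1) (Measure.prod (gaussianReal 0 1) (gaussianReal 0 1))

lemma gaussianPDFReal_zero_one (x : ℝ) : φ x = (√(2 * π))⁻¹ * exp (-x ^ 2 / 2) := by
  simp [gaussianPDFReal]

lemma continuous_gaussianPDFReal_zero_one : Continuous φ := by
  simp only [funext gaussianPDFReal_zero_one]
  fun_prop

lemma gaussianPDFReal_zero_one_neg (x : ℝ) : φ (-x) = φ x := by
  simp [gaussianPDFReal_zero_one]

lemma gaussianPDFReal_zero_one_le_of_abs_le {a b : ℝ} (h : |a| ≤ |b|) : φ b ≤ φ a := by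
  simp only [gaussianPDFReal_zero_one]
  gcongr _ * exp ?_
  nlinarith [sq_abs a, sq_abs b, abs_nonneg a]

lemma hasDerivAt_gaussianPDFReal_zero_one (x : ℝ) : HasDerivAt φ (-(x * φ x)) x := by
  have h : HasDerivAt (fun t => -t ^ 2 / 2) (-x) x := by
    simpa [neg_div] using ((hasDerivAt_pow 2 x).div_const 2).fun_neg
  rw [funext gaussianPDFReal_zero_one]
  beta_reduce
  exact (h.exp.const_mul _).congr_deriv (by ring)

lemma abs_mul_gaussianPDFReal_zero_one_le_one (x : ℝ) : |x| * φ x ≤ 1 := by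
  -- `|x| ≤ 1 + x²/2 ≤ exp (x²/2)` and `√(2π) ≥ 1`
  have hx : |x| ≤ exp (x ^ 2 / 2) := by
    nlinarith [add_one_le_exp (x ^ 2 / 2), sq_abs x, sq_nonneg (|x| - 1)]
  have hpi : 1 ≤ √(2 * π) := one_le_sqrt.2 (by linarith [pi_gt_three])
  rw [gaussianPDFReal_zero_one, neg_div, exp_neg]
  calc |x| * ((√(2 * π))⁻¹ * (exp (x ^ 2 / 2))⁻¹)
      = (√(2 * π))⁻¹ * (|x| / exp (x ^ 2 / 2)) := by ring
    _ ≤ 1 * 1 := by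
      gcongr
      · exact inv_le_one_of_one_le₀ hpi
      · exact div_le_one_of_le₀ hx (exp_pos _).le
    _ = 1 := one_mul 1

lemma abs_gaussianPDFReal_zero_one_sub_le (a b : ℝ) : |φ a - φ b| ≤ |a - b| := by
  simpa [Real.norm_eq_abs] using
    (convex_univ (𝕜 := ℝ)).norm_image_sub_le_of_norm_hasDerivWithin_le (C := 1)
      (fun x _ => (hasDerivAt_gaussianPDFReal_zero_one x).hasDerivWithinAt)
      (fun x _ => by simpa [abs_mul, abs_of_nonneg (gaussianPDFReal_nonneg 0 1 x)]
        using abs_mul_gaussianPDFReal_zero_one_le_one x) (mem_univ b) (mem_univ a)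

lemma setIntegral_Ioo_id_gaussianReal {a b : ℝ} (hab : a ≤ b) :
    ∫ x in Ioo a b, x ∂γ = φ a - φ b := by
  rw [← integral_indicator measurableSet_Ioo, integral_gaussianReal_eq_integral_smul one_ne_zero]
  simp_rw [smul_eq_mul, ← indicator_mul_right]
  rw [integral_indicator measurableSet_Ioo, ← integral_Ioc_eq_integral_Ioo,
    ← intervalIntegral.integral_of_le hab,
    intervalIntegral.integral_eq_sub_of_hasDerivAt (f := fun x => -φ x)]
  · ring
  · intro x _
    simpa [mul_comm] using (hasDerivAt_gaussianPDFReal_zero_one x).fun_neg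
  · exact (continuous_gaussianPDFReal_zero_one.mul continuous_id).intervalIntegrable a b

noncomputable def bandMoment (w s c : ℝ) : ℝ := φ ((w + c) / s) - φ ((w - c) / s)

lemma bandMoment_neg (w s c : ℝ) : bandMoment w s (-c) = -bandMoment w s c := by
  simp only [bandMoment, sub_neg_eq_add, ← sub_eq_add_neg, neg_sub]

lemma bandMoment_nonpos {w s c : ℝ} (hw : 0 ≤ w) (hs : 0 < s) (hc : 0 ≤ c) :
    bandMoment w s c ≤ 0 := by
  rw [bandMoment, sub_nonpos]
  apply gaussianPDFReal_zero_one_le_of_abs_le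
  rw [abs_div, abs_div, abs_of_nonneg (by linarith : 0 ≤ w + c)]
  gcongr
  exact abs_le.2 ⟨by linarith, by linarith⟩

lemma abs_bandMoment_le (w : ℝ) {s : ℝ} (hs : 0 < s) (c : ℝ) :
    |bandMoment w s c| ≤ 2 * |c| / s := by
  refine (abs_gaussianPDFReal_zero_one_sub_le _ _).trans_eq ?_
  rw [← sub_div, abs_div, abs_of_pos hs, show w + c - (w - c) = 2 * c by ring, abs_mul,
    abs_two]

lemma setIntegral_band_gaussianReal {w s : ℝ} (hw : 0 ≤ w) (hs : 0 < s) (c : ℝ) :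
    ∫ x in {x | -w < c + s * x ∧ c + s * x < w}, x ∂γ = bandMoment w s c := by
  have hband : {x | -w < c + s * x ∧ c + s * x < w} = Ioo ((-w - c) / s) ((w - c) / s) := by
    ext x
    simp only [mem_ofPred_eq, mem_Ioo, div_lt_iff₀ hs, lt_div_iff₀ hs]
    constructor <;> rintro ⟨h1, h2⟩ <;> constructor <;> linarith
  rw [hband, setIntegral_Ioo_id_gaussianReal (by gcongr; linarith), bandMoment,
    ← gaussianPDFReal_zero_one_neg, ← neg_div, neg_sub', sub_neg_eq_add, neg_neg]

lemma setIntegral_Ioo_neg_mul_of_odd {g f : ℝ → ℝ} (hg : Continuous g) (hf : Continuous f)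
    (hodd : ∀ u, g (-u) = -g u) {w : ℝ} (hw : 0 ≤ w) :
    ∫ u in Ioo (-w) w, g u * f u = ∫ u in 0..w, g u * (f u - f (-u)) := by
  have hgf : Continuous fun u => g u * f u := hg.mul hf
  rw [← integral_Ioc_eq_integral_Ioo, ← intervalIntegral.integral_of_le (by linarith),
    ← intervalIntegral.integral_add_adjacent_intervals (hgf.intervalIntegrable _ 0)
      (hgf.intervalIntegrable 0 _),
    ← neg_zero, ← intervalIntegral.integral_comp_neg (fun u => g u * f u), neg_zero,
    ← intervalIntegral.integral_add
      ((by fun_prop : Continuous fun u => g (-u) * f (-u)).intervalIntegrable _ _)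
      (hgf.intervalIntegrable _ _)]
  congr 1 with u
  rw [hodd]
  ring

/-- `E[X; |X̃₂| < η, |X̃₁| < η | Z̃ = z]`; `s⁻¹ φ ((u - α z) / s)` is the density of `X̃₁` given
`Z̃ = z`. -/
noncomputable def conditionalDrift (η α s z : ℝ) : ℝ :=
  ∫ u in Ioo (-η) η, bandMoment η s (α * u) * (s⁻¹ * φ ((u - α * z) / s))

lemma conditionalDrift_eq_intervalIntegral {η α s z : ℝ} (hη : 0 ≤ η) :
    conditionalDrift η α s z =
      -s⁻¹ * ∫ u in 0..η, bandMoment η s (α * u) * bandMoment u s (α * z) := by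
  have hφ := continuous_gaussianPDFReal_zero_one
  rw [conditionalDrift, setIntegral_Ioo_neg_mul_of_odd (g := fun u => bandMoment η s (α * u))
    (by unfold bandMoment; fun_prop) (by fun_prop) (fun u => by rw [mul_neg, bandMoment_neg]) hη,
    ← intervalIntegral.integral_const_mul]
  congr 1 with u
  simp only [bandMoment, ← gaussianPDFReal_zero_one_neg ((-u - α * z) / s)]
  ring_nf

lemma bandMoment_mul_bandMoment_mem_Icc {η α s z u : ℝ} (hη : 0 ≤ η) (hα : 0 ≤ α) (hs : 0 < s)
    (hz : 0 ≤ z) (hu : 0 ≤ u) :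
    bandMoment η s (α * u) * bandMoment u s (α * z) ∈ Icc 0 (4 * α ^ 2 * z / s ^ 2 * u) := by
  have h₁ := bandMoment_nonpos hη hs (mul_nonneg hα hu)
  have h₂ := bandMoment_nonpos hu hs (mul_nonneg hα hz)
  refine ⟨mul_nonneg_of_nonpos_of_nonpos h₁ h₂, ?_⟩
  calc bandMoment η s (α * u) * bandMoment u s (α * z)
      = |bandMoment η s (α * u)| * |bandMoment u s (α * z)| := by
        rw [abs_of_nonpos h₁, abs_of_nonpos h₂, neg_mul_neg]
    _ ≤ (2 * |α * u| / s) * (2 * |α * z| / s) :=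
        mul_le_mul (abs_bandMoment_le _ hs _) (abs_bandMoment_le _ hs _) (abs_nonneg _)
          (by positivity)
    _ = 4 * α ^ 2 * z / s ^ 2 * u := by
        rw [abs_of_nonneg (mul_nonneg hα hu), abs_of_nonneg (mul_nonneg hα hz)]
        field_simp
        ring

lemma conditionalDrift_mem_Icc {η α s z : ℝ} (hη : 0 ≤ η) (hα : 0 ≤ α) (hs : 0 < s)
    (hz : 0 ≤ z) :
    conditionalDrift η α s z ∈ Icc (-(2 * α ^ 2 * η ^ 2 / s ^ 3 * z)) 0 := by
  set B := fun u => bandMoment η s (α * u) * bandMoment u s (α * z)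
  have hB : Continuous B := by
    have := continuous_gaussianPDFReal_zero_one
    simp only [B, bandMoment]
    fun_prop
  have hB₀ : 0 ≤ ∫ u in 0..η, B u := intervalIntegral.integral_nonneg hη
    fun u hu => (bandMoment_mul_bandMoment_mem_Icc hη hα hs hz hu.1).1
  have hB₁ : ∫ u in 0..η, B u ≤ 2 * α ^ 2 * z / s ^ 2 * η ^ 2 := by
    calc ∫ u in 0..η, B u ≤ ∫ u in 0..η, 4 * α ^ 2 * z / s ^ 2 * u :=
          intervalIntegral.integral_mono_on hη (hB.intervalIntegrable _ _)
            ((continuous_const.mul continuous_id).intervalIntegrable _ _)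
            fun u hu => (bandMoment_mul_bandMoment_mem_Icc hη hα hs hz hu.1).2
      _ = 2 * α ^ 2 * z / s ^ 2 * η ^ 2 := by
          rw [intervalIntegral.integral_const_mul, integral_id]
          ring
  rw [conditionalDrift_eq_intervalIntegral hη, mem_Icc, neg_mul, neg_le_neg_iff, neg_nonpos]
  refine ⟨?_, mul_nonneg (inv_nonneg.2 hs.le) hB₀⟩
  calc s⁻¹ * ∫ u in 0..η, B u ≤ s⁻¹ * (2 * α ^ 2 * z / s ^ 2 * η ^ 2) := by gcongr
    _ = 2 * α ^ 2 * η ^ 2 / s ^ 3 * z := by field_simp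

lemma integral_comp_const_add_mul_gaussianReal {s : ℝ} (hs : 0 < s) (m : ℝ) (G : ℝ → ℝ) :
    ∫ y, G (m + s * y) ∂γ = ∫ u, s⁻¹ * φ ((u - m) / s) * G u := by
  set F : ℝ → ℝ := fun u => s⁻¹ * φ ((u - m) / s) * G u
  have hF (y : ℝ) : φ y * G (m + s * y) = s * F (m + s * y) := by
    simp only [F, add_sub_cancel_left, mul_div_cancel_left₀ _ hs.ne']
    field_simp
  calc ∫ y, G (m + s * y) ∂γ = ∫ y, s * F (m + s * y) := by
        simp_rw [integral_gaussianReal_eq_integral_smul one_ne_zero, smul_eq_mul, hF]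
    _ = ∫ u, F u := by
        rw [integral_const_mul, Measure.integral_comp_mul_left (fun y => F (m + y)),
          integral_add_left_eq_self, abs_of_pos (inv_pos.2 hs), smul_eq_mul,
          mul_inv_cancel_left₀ hs.ne']

/-- The no-trade event in the coordinates `(z, y, x)` of `(Z̃, Y, X)`. -/
def noTradeEvent (η α s : ℝ) : Set (ℝ × ℝ × ℝ) :=
  {p | (-η < α * (α * p.1 + s * p.2.1) + s * p.2.2 ∧ α * (α * p.1 + s * p.2.1) + s * p.2.2 < η) ∧
    (-η < α * p.1 + s * p.2.1 ∧ α * p.1 + s * p.2.1 < η) ∧ η ≤ p.1}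

lemma measurableSet_noTradeEvent (η α s : ℝ) : MeasurableSet (noTradeEvent η α s) := by
  unfold noTradeEvent
  measurability

lemma integral_indicator_noTradeEvent_slice {η α s : ℝ} (hη : 0 ≤ η) (hs : 0 < s) (z y : ℝ) :
    ∫ x, (noTradeEvent η α s).indicator (fun p => p.2.2) (z, y, x) ∂γ =
      (Ici η).indicator
        (fun z => (Ioo (-η) η).indicator (fun u => bandMoment η s (α * u)) (α * z + s * y)) z := by
  by_cases hc : η ≤ z ∧ α * z + s * y ∈ Ioo (-η) η
  · set c := α * (α * z + s * y)
    have hband : MeasurableSet {x | -η < c + s * x ∧ c + s * x < η} := by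
      measurability
    rw [indicator_of_mem (mem_Ici.2 hc.1), indicator_of_mem hc.2,
      ← setIntegral_band_gaussianReal hη hs, ← integral_indicator hband]
    congr 1 with x
    simp [noTradeEvent, indicator, hc.1, mem_Ioo.1 hc.2, c]
  · have hslice (x : ℝ) : (noTradeEvent η α s).indicator (fun p => p.2.2) (z, y, x) = 0 :=
      indicator_of_notMem (fun h => hc ⟨h.2.2, h.2.1⟩) _
    simp only [hslice, integral_zero, indicator_apply, mem_Ici]
    split_ifs <;> tauto

lemma conditionalDrift_eq_integral_gaussianReal {η α s : ℝ} (hs : 0 < s) (z : ℝ) :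
    conditionalDrift η α s z =
      ∫ y, (Ioo (-η) η).indicator (fun u => bandMoment η s (α * u)) (α * z + s * y) ∂γ := by
  rw [integral_comp_const_add_mul_gaussianReal hs, conditionalDrift,
    ← integral_indicator measurableSet_Ioo]
  congr 1 with u
  simp only [indicator_apply]
  split_ifs <;> ring

lemma setIntegral_noTradeEvent {η α s : ℝ} (hη : 0 ≤ η) (hs : 0 < s) :
    ∫ p in noTradeEvent η α s, p.2.2 ∂γ³ = ∫ z in Ici η, conditionalDrift η α s z ∂γ := by
  set F := (noTradeEvent η α s).indicator fun p : ℝ × ℝ × ℝ => p.2.2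
  have hA := measurableSet_noTradeEvent η α s
  have hFm : Measurable F := measurable_snd.snd.indicator hA
  have hF (p : ℝ × ℝ × ℝ) : ‖F p‖ ≤ ‖p.2.2‖ := norm_indicator_le_norm_self _ _
  have hFint : Integrable F γ³ :=
    ((IsGaussian.integrable_id.comp_snd γ).comp_snd γ).mono hFm.aestronglyMeasurable
      (ae_of_all _ hF)
  have hFint_slice (z : ℝ) : Integrable (fun q => F (z, q)) (Measure.prod γ γ) :=
    (IsGaussian.integrable_id.comp_snd γ).mono
      (hFm.comp measurable_prodMk_left).aestronglyMeasurable (ae_of_all _ fun q => hF (z, q))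
  calc ∫ p in noTradeEvent η α s, p.2.2 ∂γ³ = ∫ p, F p ∂γ³ := (integral_indicator hA).symm
    _ = ∫ z, ∫ y, ∫ x, F (z, y, x) ∂γ ∂γ ∂γ := by
        rw [integral_prod _ hFint]
        congr 1 with z
        exact integral_prod _ (hFint_slice z)
    _ = ∫ z, (Ici η).indicator (conditionalDrift η α s) z ∂γ := by
        congr 1 with z
        simp only [F, integral_indicator_noTradeEvent_slice hη hs]
        by_cases hz : z ∈ Ici η
        · simp only [indicator_of_mem hz, conditionalDrift_eq_integral_gaussianReal hs]
        · simp only [indicator_of_notMem hz, integral_zero]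
    _ = ∫ z in Ici η, conditionalDrift η α s z ∂γ := integral_indicator measurableSet_Ici

lemma setIntegral_conditionalDrift_mem_Icc {η α s : ℝ} (hη : 0 ≤ η) (hα : 0 ≤ α) (hs : 0 < s) :
    ∫ z in Ici η, conditionalDrift η α s z ∂γ ∈
      Icc (-(2 * α ^ 2 * η ^ 2 / s ^ 3 * ∫ z, |z| ∂γ)) 0 := by
  set c := 2 * α ^ 2 * η ^ 2 / s ^ 3
  have hJ (z : ℝ) (hz : z ∈ Ici η) := conditionalDrift_mem_Icc hη hα hs (hη.trans hz)
  have hint : Integrable (fun z => c * |z|) γ := IsGaussian.integrable_id.abs.const_mul c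
  refine ⟨?_, setIntegral_nonpos measurableSet_Ici fun z hz => (hJ z hz).2⟩
  rw [neg_le, ← integral_neg, ← integral_const_mul]
  calc ∫ z in Ici η, -conditionalDrift η α s z ∂γ ≤ ∫ z in Ici η, c * |z| ∂γ := by
        refine integral_mono_of_nonneg ?_ hint.integrableOn ?_ <;>
          refine ae_restrict_of_forall_mem measurableSet_Ici fun z hz => ?_
        · exact neg_nonneg.2 (hJ z hz).2
        · simp only [abs_of_nonneg (hη.trans hz)]
          exact neg_le.1 (hJ z hz).1
    _ ≤ ∫ z, c * |z| ∂γ := setIntegral_le_integral hint (ae_of_all _ fun z => by positivity)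

lemma map_prodMk_prodMk_eq_prod_of_iIndepFun {Ω β : Type*} [MeasurableSpace Ω] [MeasurableSpace β]
    {μ : Measure Ω} [IsFiniteMeasure μ] {X Y Z : Ω → β} (hind : iIndepFun ![X, Y, Z] μ)
    (hX : AEMeasurable X μ) (hY : AEMeasurable Y μ) (hZ : AEMeasurable Z μ) :
    μ.map (fun ω => (Z ω, Y ω, X ω)) = (μ.map Z).prod ((μ.map Y).prod (μ.map X)) := by
  have hmeas (i : Fin 3) : AEMeasurable (![X, Y, Z] i) μ := by fin_cases i <;> assumption
  have hYX : IndepFun Y X μ := hind.indepFun (i := 1) (j := 0) (by decide)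
  have hYXZ : IndepFun (fun ω => (Y ω, X ω)) Z μ :=
    hind.indepFun_prodMk₀ hmeas 1 0 2 (by decide) (by decide)
  rw [(indepFun_iff_map_prod_eq_prod_map_map hZ (hY.prodMk hX)).1 hYXZ.symm,
    (indepFun_iff_map_prod_eq_prod_map_map hY hX).1 hYX]

/-- the k = 1 hysteresis drag term is non-positive and O(α²):
for independent standard Gaussians X, Y, Z̃ and X̃₁ = αZ̃ + √(1-α²)Y,
X̃₂ = αX̃₁ + √(1-α²)X, the integral E[X · 1{|X̃₂|<η, |X̃₁|<η, Z̃ ≥ η}] is ≤ 0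
and bounded in absolute value by C(η) α². -/
theorem hysteresis_drag_k1_bound (η : ℝ) (hη : 0 < η) :
    ∃ C : ℝ, ∀ {Ω : Type} [MeasureSpace Ω] (μ : Measure Ω) [IsProbabilityMeasure μ]
      (X Y Z : Ω → ℝ),
      iIndepFun ![X, Y, Z] μ →
      Measure.map X μ = gaussianReal 0 1 →
      Measure.map Y μ = gaussianReal 0 1 →
      Measure.map Z μ = gaussianReal 0 1 →
      ∀ α : ℝ, 0 ≤ α → α < 1 / 2 →
        (∫ ω in {ω | (-η < α * (α * Z ω + Real.sqrt (1 - α ^ 2) * Y ω) +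
                        Real.sqrt (1 - α ^ 2) * X ω ∧
                      α * (α * Z ω + Real.sqrt (1 - α ^ 2) * Y ω) +
                        Real.sqrt (1 - α ^ 2) * X ω < η) ∧
                     (-η < α * Z ω + Real.sqrt (1 - α ^ 2) * Y ω ∧
                      α * Z ω + Real.sqrt (1 - α ^ 2) * Y ω < η) ∧
                     η ≤ Z ω}, X ω ∂μ) ≤ 0 ∧
        |∫ ω in {ω | (-η < α * (α * Z ω + Real.sqrt (1 - α ^ 2) * Y ω) +
                        Real.sqrt (1 - α ^ 2) * X ω ∧
                      α * (α * Z ω + Real.sqrt (1 - α ^ 2) * Y ω) +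
                        Real.sqrt (1 - α ^ 2) * X ω < η) ∧
                     (-η < α * Z ω + Real.sqrt (1 - α ^ 2) * Y ω ∧
                      α * Z ω + Real.sqrt (1 - α ^ 2) * Y ω < η) ∧
                     η ≤ Z ω}, X ω ∂μ| ≤ C * α ^ 2 := by
  refine ⟨16 * η ^ 2 * ∫ z, |z| ∂γ, fun {Ω} _ μ _ X Y Z hind hX hY hZ α hα₀ hα => ?_⟩
  set s := √(1 - α ^ 2)
  have hs : 1 / 2 ≤ s := (le_sqrt (by norm_num) (by nlinarith)).2 (by nlinarith)
  have hmeas {W : Ω → ℝ} (hW : μ.map W = γ) : AEMeasurable W μ :=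
    aemeasurable_of_map_neZero (by rw [hW]; infer_instance)
  have hT := (hmeas hZ).prodMk ((hmeas hY).prodMk (hmeas hX))
  have hlaw : μ.map (fun ω => (Z ω, Y ω, X ω)) = γ³ := by
    rw [map_prodMk_prodMk_eq_prod_of_iIndepFun hind (hmeas hX) (hmeas hY) (hmeas hZ), hX, hY, hZ]
  have hE := setIntegral_map (measurableSet_noTradeEvent η α s)
    measurable_snd.snd.aestronglyMeasurable hT
  rw [hlaw, setIntegral_noTradeEvent hη.le (by linarith)] at hE
  obtain ⟨hlow, hup⟩ := hE ▸ setIntegral_conditionalDrift_mem_Icc hη.le hα₀ (by linarith)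
  refine ⟨hup, abs_le.2 ⟨le_trans (neg_le_neg ?_) hlow, hup.trans (by positivity)⟩⟩
  have hs₃ : 2 / s ^ 3 ≤ 16 := by
    rw [div_le_iff₀ (by positivity)]
    nlinarith [pow_le_pow_left₀ (by norm_num) hs 3]
  calc 2 * α ^ 2 * η ^ 2 / s ^ 3 * ∫ z, |z| ∂γ = 2 / s ^ 3 * (η ^ 2 * α ^ 2 * ∫ z, |z| ∂γ) := by
        ring
    _ ≤ 16 * (η ^ 2 * α ^ 2 * ∫ z, |z| ∂γ) := by gcongr
    _ = 16 * η ^ 2 * (∫ z, |z| ∂γ) * α ^ 2 := by ring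
end

section
/- For all η > 0, the expression -1/(4η f(-η) F(-η)²) - 6η f(-η)/F(-η)² - f(-η)²/F(-η)³ + f(-η)/F(-η)² + 1/F(-η) is strictly negative. -/
open MeasureTheory Real Set

noncomputable def gpdf (x : ℝ) : ℝ := (Real.sqrt (2 * Real.pi))⁻¹ * Real.exp (-x ^ 2 / 2)
noncomputable def gcdf (u : ℝ) : ℝ := ∫ x in Set.Iic u, gpdf x

lemma gpdf_pos (x : ℝ) : 0 < gpdf x := by
  unfold gpdf
  positivity

lemma gpdf_lt_half (x : ℝ) : gpdf x < 1 / 2 := by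
  have h1 : Real.exp (-x ^ 2 / 2) ≤ 1 := by
    apply Real.exp_le_one_iff.mpr; nlinarith [sq_nonneg x]
  have h2 : (2 : ℝ) < Real.sqrt (2 * Real.pi) := by
    nlinarith [Real.sq_sqrt (show (0:ℝ) ≤ 2 * Real.pi by positivity),
      Real.sqrt_nonneg (2 * Real.pi), Real.pi_gt_three]
  have h3 : (Real.sqrt (2 * Real.pi))⁻¹ < 1 / 2 := by
    rw [inv_lt_comm₀ (by linarith) (by norm_num)]
    simpa using h2
  unfold gpdf
  calc (Real.sqrt (2 * Real.pi))⁻¹ * Real.exp (-x ^ 2 / 2)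
      ≤ (Real.sqrt (2 * Real.pi))⁻¹ * 1 := by
        apply mul_le_mul_of_nonneg_left h1 (by positivity)
    _ = (Real.sqrt (2 * Real.pi))⁻¹ := by ring
    _ < 1 / 2 := h3

lemma gpdf_integrable : Integrable gpdf := by
  have : Integrable (fun x : ℝ => Real.exp (-(1/2) * x ^ 2)) :=
    integrable_exp_neg_mul_sq (by norm_num)
  have h := this.const_mul (Real.sqrt (2 * Real.pi))⁻¹
  convert h using 2 with x
  unfold gpdf
  ring_nf

lemma gcdf_pos (u : ℝ) : 0 < gcdf u := by
  unfold gcdf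
  rw [setIntegral_pos_iff_support_of_nonneg_ae]
  · have : Function.support gpdf = Set.univ := by
      ext x; simp [Function.mem_support, (gpdf_pos x).ne']
    rw [this, Set.univ_inter]
    simp [Real.volume_Iic]
  · filter_upwards with x using (gpdf_pos x).le
  · exact gpdf_integrable.integrableOn

lemma integral_gpdf : ∫ x, gpdf x = 1 := by
  have h : ∫ x : ℝ, Real.exp (-(1/2) * x ^ 2) = Real.sqrt (π / (1/2)) :=
    integral_gaussian (1/2)
  have h2 : ∫ x : ℝ, gpdf x = (Real.sqrt (2 * Real.pi))⁻¹ * ∫ x : ℝ, Real.exp (-(1/2) * x ^ 2) := by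
    rw [← integral_const_mul]
    congr 1 with x
    unfold gpdf; ring_nf
  rw [h2, h]
  rw [show π / (1/2) = 2 * π by ring]
  rw [inv_mul_cancel₀]
  positivity

lemma gcdf_zero : gcdf 0 = 1 / 2 := by
  have hsym : (∫ x in Set.Iic (0:ℝ), gpdf x) = ∫ x in Set.Ioi (0:ℝ), gpdf x := by
    have h := integral_comp_neg_Iic (0:ℝ) gpdf
    simp only [neg_zero] at h
    rw [← h]
    congr 1 with x
    unfold gpdf; ring_nf
  have htot := intervalIntegral.integral_Iic_add_Ioi (b := (0:ℝ))
    gpdf_integrable.integrableOn gpdf_integrable.integrableOn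
  rw [integral_gpdf] at htot
  unfold gcdf
  rw [hsym] at htot
  unfold gcdf at *
  linarith [hsym]

lemma gcdf_lt_half {u : ℝ} (hu : u < 0) : gcdf u < 1 / 2 := by
  have hsub : gcdf 0 - gcdf u = ∫ x in u..0, gpdf x :=
    intervalIntegral.integral_Iic_sub_Iic gpdf_integrable.integrableOn gpdf_integrable.integrableOn
  have hpos : 0 < ∫ x in u..0, gpdf x :=
    intervalIntegral.intervalIntegral_pos_of_pos
      gpdf_integrable.intervalIntegrable (fun x => gpdf_pos x) hu
  rw [gcdf_zero] at hsub
  linarith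

/-- the second derivative of H along the constraint curve at α = 0
is strictly negative for all η > 0. -/
theorem hessian_test_negative (η : ℝ) (hη : 0 < η) :
    -(1 / (4 * η * gpdf (-η) * gcdf (-η) ^ 2)) - 6 * η * gpdf (-η) / gcdf (-η) ^ 2 -
        gpdf (-η) ^ 2 / gcdf (-η) ^ 3 + gpdf (-η) / gcdf (-η) ^ 2 + 1 / gcdf (-η) < 0 := by
  set f := gpdf (-η) with hf
  set F := gcdf (-η) with hF
  have hfp : 0 < f := gpdf_pos _
  have hfl : f < 1 / 2 := gpdf_lt_half _
  have hFp : 0 < F := gcdf_pos _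
  have hFl : F < 1 / 2 := gcdf_lt_half (by linarith)
  have hden : (0:ℝ) < 4 * η * f * F ^ 3 := by positivity
  have key : (-(1 / (4 * η * f * F ^ 2)) - 6 * η * f / F ^ 2 -
      f ^ 2 / F ^ 3 + f / F ^ 2 + 1 / F) * (4 * η * f * F ^ 3) =
      -(F + 24 * η^2 * f^2 * F + 4 * η * f^3 - 4 * η * f^2 * F - 4 * η * f * F^2) := by
    field_simp
    ring
  have hpoly : 0 < F + 24 * η^2 * f^2 * F + 4 * η * f^3 - 4 * η * f^2 * F - 4 * η * f * F^2 := by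
    nlinarith [sq_nonneg (η * f - 1/12), mul_pos hη hfp, mul_pos (mul_pos hη hfp) hFp,
      mul_pos (mul_pos hη hfp) (mul_pos hfp hfp)]
  by_contra hcon
  push_neg at hcon
  nlinarith [mul_nonneg hcon hden.le]
end
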